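/- arXiv:1008.2040 — 4 statements merged into one kernel-verified Lean document; each statement's English description precedes it below -/
import Mathlib

section
/- Let P be a polytope in ℝ^d containing an inscribed Euclidean ball of radius g (a ball contained in P tangent to every facet), so g is the inradius of P. Then for all r ∈ [0, g], V_P(r) = vol_d(P) · (1 − (1 − r/g)^d), and V_P(r) = vol_d(P) for all r ≥ g. Moreover, for r ∈ [0, g] the r-interior P(r) coincides with the homothet (1 − r/g)·P taken with center the center of the inscribed ball. -/
open MeasureTheory Metric Set
open scoped RealInnerProductSpace

/-- The `r`-interior of a set `P`: points of `P` at distance at least `r` from `∂P`. -/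
noncomputable def innerInterior {d : ℕ} (P : Set (EuclideanSpace ℝ (Fin d))) (r : ℝ) :
    Set (EuclideanSpace ℝ (Fin d)) :=
  {x ∈ P | r ≤ infDist x (frontier P)}

/-- The inner neighborhood volume function `V_P(r) = vol_d(P \ P(r))`. -/
noncomputable def VP {d : ℕ} (P : Set (EuclideanSpace ℝ (Fin d))) (r : ℝ) : ℝ :=
  (volume (P \ innerInterior P r)).toReal

/-- The inradius of `P`: the largest `r` such that `P` contains a closed ball of radius `r`. -/
noncomputable def inradius {d : ℕ} (P : Set (EuclideanSpace ℝ (Fin d))) : ℝ :=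
  sSup {r : ℝ | ∃ x, closedBall x r ⊆ P}

/-- If a polytope `P ⊆ ℝ^d` contains a ball of radius `g` centered at `O`
tangent to all its facet hyperplanes, then `g` is the inradius of `P`,
`V_P(r) = vol_d(P)(1 - (1 - r/g)^d)` on `[0,g]`, `V_P(r) = vol_d(P)` for `r ≥ g`, and
for `r ∈ [0,g]` the `r`-interior of `P` is the homothet of `P` with center `O` and
ratio `1 - r/g`. -/
theorem statement3 {d m : ℕ} (hd : 0 < d) (P : Set (EuclideanSpace ℝ (Fin d)))
    (N : Fin m → EuclideanSpace ℝ (Fin d)) (c : Fin m → ℝ)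
    (hN : ∀ j, ‖N j‖ = 1)
    (hP : P = ⋂ j, {x : EuclideanSpace ℝ (Fin d) | c j ≤ ⟪x, N j⟫})
    (hmin : ∀ j : Fin m,
      (⋂ i ∈ Finset.univ.erase j, {x : EuclideanSpace ℝ (Fin d) | c i ≤ ⟪x, N i⟫}) ≠ P)
    (hcomp : IsCompact P)
    (hint : (interior P).Nonempty)
    (O : EuclideanSpace ℝ (Fin d)) (g : ℝ) (hg : 0 < g)
    (hball : closedBall O g ⊆ P)
    (htangent : ∀ j, ⟪O, N j⟫ - c j = g) :
    inradius P = g ∧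
    (∀ r ∈ Icc (0 : ℝ) g, VP P r = (volume P).toReal * (1 - (1 - r / g) ^ d)) ∧
    (∀ r, g ≤ r → VP P r = (volume P).toReal) ∧
    (∀ r ∈ Icc (0 : ℝ) g,
      innerInterior P r = (fun x => O + (1 - r / g) • (x - O)) '' P) := by
  have hO : O ∈ P := hball (mem_closedBall_self hg.le)
  have hmemP : ∀ x : EuclideanSpace ℝ (Fin d), x ∈ P ↔ ∀ j, c j ≤ ⟪x, N j⟫ := by
    intro x; rw [hP]; simp [Set.mem_iInter]
  have keyA : ∀ v : EuclideanSpace ℝ (Fin d), v ≠ 0 → (∀ j, 0 ≤ ⟪v, N j⟫) → False := by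
    intro v hv0 hv
    obtain ⟨C, hC⟩ := hcomp.isBounded.subset_closedBall O
    have hmem : ∀ n : ℕ, O + (n : ℝ) • v ∈ P := by
      intro n
      rw [hmemP]
      intro j
      have h1 : ⟪O + (n:ℝ) • v, N j⟫ = ⟪O, N j⟫ + (n:ℝ) * ⟪v, N j⟫ := by
        rw [inner_add_left, real_inner_smul_left]
      have h2 := htangent j
      have h3 := hv j
      have h4 : (0:ℝ) ≤ n := Nat.cast_nonneg n
      nlinarith
    obtain ⟨n, hn⟩ := exists_nat_gt (C / ‖v‖)
    have h2 := hC (hmem n)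
    rw [mem_closedBall] at h2
    have h5 : dist (O + (n:ℝ) • v) O = (n:ℝ) * ‖v‖ := by
      simp [dist_eq_norm, norm_smul]
    have hvpos : 0 < ‖v‖ := norm_pos_iff.mpr hv0
    rw [h5] at h2
    have := (div_lt_iff₀ hvpos).mp hn
    linarith
  have hvne : (EuclideanSpace.single (⟨0, hd⟩ : Fin d) (1:ℝ)) ≠ 0 := by
    intro hz
    have h1 : ‖EuclideanSpace.single (⟨0, hd⟩ : Fin d) (1:ℝ)‖ = 1 := by
      rw [EuclideanSpace.norm_single]; simp
    rw [hz] at h1; simp at h1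
  haveI : Nontrivial (EuclideanSpace ℝ (Fin d)) :=
    ⟨⟨EuclideanSpace.single (⟨0, hd⟩ : Fin d) (1:ℝ), 0, hvne⟩⟩
  haveI : NullSingletonClass (volume : Measure (EuclideanSpace ℝ (Fin d))) := by infer_instance
  have hm : m ≠ 0 := by
    intro h
    exact keyA _ hvne fun j => absurd j.2 (by omega)
  haveI : Nonempty (Fin m) := ⟨⟨0, Nat.pos_of_ne_zero hm⟩⟩
  have huniv : (Finset.univ : Finset (Fin m)).Nonempty := Finset.univ_nonempty
  set f : EuclideanSpace ℝ (Fin d) → ℝ :=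
    fun x => Finset.univ.inf' huniv (fun j => ⟪x, N j⟫ - c j) with hfdef
  have hfront : ∀ y ∈ frontier P, ∃ j, ⟪y, N j⟫ ≤ c j := by
    intro y hy
    by_contra hcon
    push_neg at hcon
    have hop : IsOpen {x : EuclideanSpace ℝ (Fin d) | ∀ j, c j < ⟪x, N j⟫} := by
      have he : {x : EuclideanSpace ℝ (Fin d) | ∀ j, c j < ⟪x, N j⟫}
          = ⋂ j, {x | c j < ⟪x, N j⟫} := by ext x; simp [Set.mem_iInter]
      rw [he]
      exact isOpen_iInter_of_finite fun j =>
        isOpen_lt continuous_const (Continuous.inner continuous_id continuous_const)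
    have hsub : {x : EuclideanSpace ℝ (Fin d) | ∀ j, c j < ⟪x, N j⟫} ⊆ P := by
      intro x hx; exact (hmemP x).mpr fun j => (hx j).le
    have hyint : y ∈ interior P := interior_maximal hsub hop hcon
    rw [hcomp.isClosed.frontier_eq] at hy
    exact hy.2 hyint
  have hinf : ∀ x ∈ P, infDist x (frontier P) = f x := by
    intro x hx
    have hfx0 : 0 ≤ f x :=
      Finset.le_inf' huniv _ fun j _ => by linarith [(hmemP x).mp hx j]
    obtain ⟨j0, -, hj0⟩ := Finset.exists_mem_eq_inf' huniv (fun j => ⟪x, N j⟫ - c j)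
    have hfx : f x = ⟪x, N j0⟫ - c j0 := hj0
    set y0 : EuclideanSpace ℝ (Fin d) := x - f x • N j0 with hy0
    have hy0P : y0 ∈ P := by
      rw [hmemP]
      intro i
      have h1 : ⟪y0, N i⟫ = ⟪x, N i⟫ - f x * ⟪N j0, N i⟫ := by
        rw [hy0, inner_sub_left, real_inner_smul_left]
      have h2 : ⟪N j0, N i⟫ ≤ 1 := by
        have := real_inner_le_norm (N j0) (N i)
        rw [hN j0, hN i] at this; linarith
      have h3 : f x ≤ ⟪x, N i⟫ - c i := Finset.inf'_le _ (Finset.mem_univ i)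
      nlinarith
    have h3 : ⟪y0, N j0⟫ = c j0 := by
      rw [hy0, inner_sub_left, real_inner_smul_left, real_inner_self_eq_norm_sq, hN j0, hfx]
      ring
    have hy0f : y0 ∈ frontier P := by
      rw [hcomp.isClosed.frontier_eq]
      refine ⟨hy0P, fun hyint => ?_⟩
      obtain ⟨ε, hε, hball'⟩ := Metric.isOpen_iff.mp isOpen_interior y0 hyint
      have hz : y0 - (ε/2) • N j0 ∈ P := by
        refine interior_subset (hball' ?_)
        rw [mem_ball, dist_eq_norm]
        simp only [sub_sub_cancel_left, norm_neg, norm_smul, hN j0]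
        rw [Real.norm_eq_abs, abs_of_pos (by linarith), mul_one]
        linarith
      have h1 := (hmemP _).mp hz j0
      have h2 : ⟪y0 - (ε/2) • N j0, N j0⟫ = ⟪y0, N j0⟫ - ε/2 := by
        rw [inner_sub_left, real_inner_smul_left, real_inner_self_eq_norm_sq, hN j0]
        ring
      rw [h2, h3] at h1
      linarith
    have hdist : dist x y0 = f x := by
      rw [hy0, dist_eq_norm]
      simp only [sub_sub_cancel, norm_smul, hN j0, Real.norm_eq_abs, mul_one]
      exact abs_of_nonneg hfx0
    refine le_antisymm (by rw [← hdist]; exact infDist_le_dist_of_mem hy0f) ?_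
    by_contra hlt
    push_neg at hlt
    obtain ⟨y, hyf, hyd⟩ := (infDist_lt_iff ⟨y0, hy0f⟩).mp hlt
    obtain ⟨j, hj⟩ := hfront y hyf
    have h1 : f x ≤ ⟪x, N j⟫ - c j := Finset.inf'_le _ (Finset.mem_univ j)
    have h2 : ⟪x - y, N j⟫ ≤ ‖x - y‖ * ‖N j‖ := real_inner_le_norm _ _
    rw [hN j, mul_one, inner_sub_left] at h2
    rw [dist_eq_norm] at hyd
    linarith
  have hinner : ∀ r : ℝ, 0 ≤ r →
      innerInterior P r = {x | ∀ j, c j + r ≤ ⟪x, N j⟫} := by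
    intro r hr
    ext x
    constructor
    · rintro ⟨hxP, hxd⟩ j
      rw [hinf x hxP] at hxd
      have h1 : f x ≤ ⟪x, N j⟫ - c j := Finset.inf'_le _ (Finset.mem_univ j)
      exact by linarith
    · intro hx
      have hxP : x ∈ P := (hmemP x).mpr fun j => by linarith [hx j]
      refine ⟨hxP, ?_⟩
      rw [hinf x hxP]
      exact Finset.le_inf' huniv _ fun j _ => by linarith [hx j]
  have hQg : {x : EuclideanSpace ℝ (Fin d) | ∀ j, c j + g ≤ ⟪x, N j⟫} = {O} := by
    ext x
    simp only [Set.mem_setOf_eq, Set.mem_singleton_iff]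
    constructor
    · intro hx
      by_contra hxO
      refine keyA (x - O) (sub_ne_zero.mpr hxO) fun j => ?_
      rw [inner_sub_left]
      linarith [hx j, htangent j]
    · rintro rfl j
      linarith [htangent j]
  have hhom : ∀ r ∈ Icc (0:ℝ) g,
      innerInterior P r = (fun x => O + (1 - r / g) • (x - O)) '' P := by
    rintro r ⟨hr0, hrg⟩
    rw [hinner r hr0]
    rcases eq_or_lt_of_le hrg with heq | hrlt
    · have hfun : (fun x : EuclideanSpace ℝ (Fin d) => O + (1 - g / g) • (x - O))
          = fun _ => O := by
        funext x; rw [div_self hg.ne', sub_self, zero_smul, add_zero]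
      rw [heq, hQg, hfun, Set.Nonempty.image_const ⟨O, hO⟩ O]
    · obtain ⟨s, hs⟩ : ∃ s : ℝ, s = 1 - r / g := ⟨_, rfl⟩
      rw [← hs]
      have hsg : s * g = g - r := by rw [hs]; field_simp
      have hs0 : 0 < s := by
        rw [hs]
        have := (div_lt_one hg).mpr hrlt
        linarith
      ext y
      simp only [Set.mem_setOf_eq, Set.mem_image]
      constructor
      · intro hy
        refine ⟨O + s⁻¹ • (y - O), ?_, ?_⟩
        · rw [hmemP]
          intro j
          have h1 : ⟪O + s⁻¹ • (y - O), N j⟫ = ⟪O, N j⟫ + s⁻¹ * (⟪y, N j⟫ - ⟪O, N j⟫) := by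
            rw [inner_add_left, real_inner_smul_left, inner_sub_left]
          have h2 := htangent j
          have h3 := hy j
          have h5 : ⟪y, N j⟫ - ⟪O, N j⟫ ≥ -(s * g) := by rw [hsg]; linarith
          have h6 : s⁻¹ * (-(s * g)) ≤ s⁻¹ * (⟪y, N j⟫ - ⟪O, N j⟫) :=
            mul_le_mul_of_nonneg_left h5 (inv_nonneg.mpr hs0.le)
          have h7 : s⁻¹ * (-(s * g)) = -g := by
            rw [mul_neg, ← mul_assoc, inv_mul_cancel₀ hs0.ne', one_mul]
          rw [h1]
          linarith
        · rw [add_sub_cancel_left, smul_smul, mul_inv_cancel₀ hs0.ne', one_smul]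
          abel
      · rintro ⟨x, hxP, rfl⟩ j
        have h1 : ⟪O + s • (x - O), N j⟫ = ⟪O, N j⟫ + s * (⟪x, N j⟫ - ⟪O, N j⟫) := by
          rw [inner_add_left, real_inner_smul_left, inner_sub_left]
        have h2 := htangent j
        have h3 := (hmemP x).mp hxP j
        rw [h1]
        nlinarith [mul_le_mul_of_nonneg_left (show -g ≤ ⟪x, N j⟫ - ⟪O, N j⟫ by linarith) hs0.le]
  have hvolP : volume P ≠ ⊤ := hcomp.measure_lt_top.ne
  have hvol : ∀ r ∈ Icc (0:ℝ) g, 0 ≤ 1 - r / g →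
      volume (innerInterior P r) = ENNReal.ofReal ((1 - r/g)^d) * volume P := by
    intro r hr ht0
    rw [hhom r hr]
    have hfun : (fun x : EuclideanSpace ℝ (Fin d) => O + (1 - r/g) • (x - O))
        = ⇑(AffineMap.homothety O (1 - r/g)) := by
      funext x
      simp only [AffineMap.homothety_apply, vsub_eq_sub, vadd_eq_add]
      abel
    rw [hfun, Measure.addHaar_image_homothety, finrank_euclideanSpace_fin,
      abs_of_nonneg (pow_nonneg ht0 d)]
  have hmain : ∀ r ∈ Icc (0:ℝ) g, VP P r = (volume P).toReal * (1 - (1 - r / g) ^ d) := by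
    intro r hr
    have ht0 : 0 ≤ 1 - r / g := by
      have := (div_le_one hg).mpr hr.2
      linarith
    have ht1 : 1 - r / g ≤ 1 := by
      have : 0 ≤ r / g := div_nonneg hr.1 hg.le
      linarith
    have htd : (1 - r/g)^d ≤ 1 := pow_le_one₀ ht0 ht1
    have hmeas : NullMeasurableSet (innerInterior P r) volume := by
      rw [hhom r hr]
      have hc : Continuous (fun x : EuclideanSpace ℝ (Fin d) => O + (1 - r / g) • (x - O)) := by
        fun_prop
      exact ((hcomp.image hc).isClosed.measurableSet).nullMeasurableSet
    have hsub : innerInterior P r ⊆ P := fun x hx => hx.1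
    have hle : volume (innerInterior P r) ≤ volume P := measure_mono hsub
    have hfin : volume (innerInterior P r) ≠ ⊤ := (lt_of_le_of_lt hle hcomp.measure_lt_top).ne
    have hle2 : ENNReal.ofReal ((1 - r/g)^d) * volume P ≤ volume P := by
      calc ENNReal.ofReal ((1 - r/g)^d) * volume P ≤ 1 * volume P :=
            mul_le_mul_left (ENNReal.ofReal_le_one.mpr htd) _
        _ = volume P := one_mul _
    unfold VP
    rw [measure_diff hsub hmeas hfin, hvol r hr ht0,
      ENNReal.toReal_sub_of_le hle2 hvolP, ENNReal.toReal_mul,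
      ENNReal.toReal_ofReal (pow_nonneg ht0 d)]
    ring
  have hVPg : ∀ r, g ≤ r → VP P r = (volume P).toReal := by
    intro r hr
    have hsubO : innerInterior P r ⊆ {O} := by
      intro x hx
      rw [← hQg]
      have h1 : g ≤ f x := le_trans hr (by rw [← hinf x hx.1]; exact hx.2)
      intro j
      have h2 : f x ≤ ⟪x, N j⟫ - c j := Finset.inf'_le _ (Finset.mem_univ j)
      linarith
    have h1 : volume (P \ innerInterior P r) ≤ volume P := measure_mono diff_subset
    have h2 : volume P ≤ volume (P \ innerInterior P r) := by
      calc volume P = volume (P \ {O}) := (measure_diff_null (measure_singleton O)).symm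
        _ ≤ volume (P \ innerInterior P r) := measure_mono (diff_subset_diff_right hsubO)
    unfold VP
    rw [le_antisymm h1 h2]
  have hrad : inradius P = g := by
    have hmem : g ∈ {r : ℝ | ∃ x, closedBall x r ⊆ P} := ⟨O, hball⟩
    have hub : ∀ r ∈ {r : ℝ | ∃ x, closedBall x r ⊆ P}, r ≤ g := by
      rintro r ⟨x, hx⟩
      by_contra hgr
      push_neg at hgr
      have hr0 : 0 < r := hg.trans hgr
      have hxQ : ∀ j, c j + r ≤ ⟪x, N j⟫ := by
        intro j
        have hmemb : x - r • N j ∈ closedBall x r := by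
          rw [mem_closedBall, dist_eq_norm]
          simp [norm_smul, hN j, abs_of_pos hr0]
        have h1 := (hmemP _).mp (hx hmemb) j
        rw [inner_sub_left, real_inner_smul_left, real_inner_self_eq_norm_sq, hN j] at h1
        nlinarith
      have hxO : x = O := by
        have hx1 : x ∈ ({O} : Set (EuclideanSpace ℝ (Fin d))) := by
          rw [← hQg]
          exact fun j => by linarith [hxQ j]
        exact hx1
      obtain ⟨j⟩ := ‹Nonempty (Fin m)›
      have := hxQ j
      rw [hxO] at this
      linarith [htangent j]
    exact le_antisymm (csSup_le ⟨g, hmem⟩ hub) (le_csSup ⟨g, fun r hr => hub r hr⟩ hmem)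
  exact ⟨hrad, hmain, hVPg, hhom⟩
end

section
/- Let 𝒜 be a gliding d-arrangement in ℝ^d, ε a multi-index, and C_ε(t) the corresponding cell at time t. If Q₀ ∈ C_ε(t₀) and Q₁ ∈ C_ε(t₁), then for every λ ∈ [0,1] the point (1−λ)Q₀ + λQ₁ belongs to C_ε((1−λ)t₀ + λt₁). Consequently, if vol_d(C_ε(t₁)) > 0 and t₀ ≠ t₁, then vol_d(C_ε((1−λ)t₀ + λt₁)) ≥ λ^d · vol_d(C_ε(t₁)) for all λ ∈ [0,1]. -/
open MeasureTheory Metric Set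
open scoped RealInnerProductSpace Pointwise

/-- The cell `C_ε(t)` of a gliding `d`-arrangement `{(H_j, v_j)}_j`, where
`H_j = {x | ⟪x - p j, N j⟫ = 0}` and `H_j(t) = {x | ⟪x - p j, N j⟫ = t⟪v j, N j⟫}`. -/
def glidingCell {d m : ℕ} (p N v : Fin m → EuclideanSpace ℝ (Fin d))
    (ε : Fin m → ℝ) (t : ℝ) : Set (EuclideanSpace ℝ (Fin d)) :=
  {x | ∀ j, 0 ≤ ε j * (⟪x - p j, N j⟫ - t * ⟪v j, N j⟫)}

/-- Convex interpolation of cells of a gliding arrangement: if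
`Q₀ ∈ C_ε(t₀)` and `Q₁ ∈ C_ε(t₁)` then `(1-λ)Q₀ + λQ₁ ∈ C_ε((1-λ)t₀ + λt₁)` for all
`λ ∈ [0,1]`; consequently if `vol_d(C_ε(t₁)) > 0` and `t₀ ≠ t₁` (with `C_ε(t₀)` nonempty),
then `vol_d(C_ε((1-λ)t₀+λt₁)) ≥ λ^d vol_d(C_ε(t₁))`. -/
theorem statement6 {d m : ℕ}
    (p N v : Fin m → EuclideanSpace ℝ (Fin d))
    (hN : ∀ j, ‖N j‖ = 1)
    (ε : Fin m → ℝ) (hε : ∀ j, ε j = 1 ∨ ε j = -1)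
    (t₀ t₁ : ℝ) :
    (∀ Q₀ ∈ glidingCell p N v ε t₀, ∀ Q₁ ∈ glidingCell p N v ε t₁,
      ∀ l ∈ Icc (0 : ℝ) 1,
        (1 - l) • Q₀ + l • Q₁ ∈ glidingCell p N v ε ((1 - l) * t₀ + l * t₁)) ∧
    ((glidingCell p N v ε t₀).Nonempty → 0 < volume (glidingCell p N v ε t₁) → t₀ ≠ t₁ →
      ∀ l ∈ Icc (0 : ℝ) 1,
        ENNReal.ofReal (l ^ d) * volume (glidingCell p N v ε t₁) ≤
          volume (glidingCell p N v ε ((1 - l) * t₀ + l * t₁))) := by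
  have key : ∀ Q₀ ∈ glidingCell p N v ε t₀, ∀ Q₁ ∈ glidingCell p N v ε t₁,
      ∀ l ∈ Icc (0 : ℝ) 1,
        (1 - l) • Q₀ + l • Q₁ ∈ glidingCell p N v ε ((1 - l) * t₀ + l * t₁) := by
    intro Q₀ h₀ Q₁ h₁ l hl j
    have e : ((1 - l) • Q₀ + l • Q₁) - p j
        = (1 - l) • (Q₀ - p j) + l • (Q₁ - p j) := by
      module
    rw [e, inner_add_left, real_inner_smul_left, real_inner_smul_left]
    have h0j := h₀ j
    have h1j := h₁ j
    have hl0 : (0:ℝ) ≤ l := hl.1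
    have hl1 : (0:ℝ) ≤ 1 - l := by linarith [hl.2]
    nlinarith [mul_nonneg hl1 h0j, mul_nonneg hl0 h1j]
  refine ⟨key, ?_⟩
  rintro ⟨Q₀, hQ₀⟩ _ _ l hl
  have hsub : (fun x => (1 - l) • Q₀ + l • x) '' glidingCell p N v ε t₁
      ⊆ glidingCell p N v ε ((1 - l) * t₀ + l * t₁) := by
    rintro _ ⟨x, hx, rfl⟩
    exact key Q₀ hQ₀ x hx l hl
  have himg : (fun x => (1 - l) • Q₀ + l • x) '' glidingCell p N v ε t₁
      = ((1 - l) • Q₀) +ᵥ (l • glidingCell p N v ε t₁) := by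
    ext y
    simp [Set.mem_vadd_set, Set.mem_smul_set, Set.mem_image]
  calc ENNReal.ofReal (l ^ d) * volume (glidingCell p N v ε t₁)
      = volume ((fun x => (1 - l) • Q₀ + l • x) '' glidingCell p N v ε t₁) := by
        rw [himg, measure_vadd, Measure.addHaar_smul]
        congr 2
        rw [abs_of_nonneg (pow_nonneg hl.1 _)]
        simp [finrank_euclideanSpace]
    _ ≤ volume (glidingCell p N v ε ((1 - l) * t₀ + l * t₁)) := measure_mono hsub
end

section
/- Let (H, v) and (H₀, v₀) be gliding hyperplanes in ℝ^d (d ≥ 2) with unit normals N and N₀ that are linearly independent, and assume v₀ is parallel to N₀ (a normal velocity). Let pr₀(u) = u − ⟨u, N₀⟩N₀ and define the trace velocity ṽ = ⟨v − v₀, N⟩ · pr₀(N)/‖pr₀(N)‖². Then for every t ∈ ℝ, the intersection H(t) ∩ H₀(t) equals the translate of H ∩ H₀ by the vector t·(v₀ + ṽ). In particular, the time-t trace of the gliding hyperplane (H,v) on (H₀,v₀) coincides with the trace at time t. -/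
open MeasureTheory Metric Set
open scoped RealInnerProductSpace

/-- Let `(H, v)` and `(H₀, v₀)` be gliding hyperplanes in `ℝ^d` (`d ≥ 2`)
with linearly independent unit normals `N`, `N₀`, and `v₀` parallel to `N₀`. With
`pr₀(u) = u - ⟪u, N₀⟫N₀` and trace velocity `ṽ = ⟪v - v₀, N⟫ pr₀(N)/‖pr₀(N)‖²`, the
intersection `H(t) ∩ H₀(t)` is the translate of `H ∩ H₀` by `t(v₀ + ṽ)`, for all `t`. -/
theorem statement7 {d : ℕ} (hd : 2 ≤ d)
    (p p₀ N N₀ v v₀ : EuclideanSpace ℝ (Fin d))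
    (hN : ‖N‖ = 1) (hN₀ : ‖N₀‖ = 1)
    (hind : LinearIndependent ℝ ![N, N₀])
    (hv₀ : ∃ a : ℝ, v₀ = a • N₀) :
    ∀ t : ℝ,
      {x : EuclideanSpace ℝ (Fin d) | ⟪x - p, N⟫ = t * ⟪v, N⟫} ∩
        {x : EuclideanSpace ℝ (Fin d) | ⟪x - p₀, N₀⟫ = t * ⟪v₀, N₀⟫} =
      (fun x => x + t • (v₀ +
          ⟪v - v₀, N⟫ • (‖N - ⟪N, N₀⟫ • N₀‖ ^ 2)⁻¹ • (N - ⟪N, N₀⟫ • N₀))) ''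
        ({x : EuclideanSpace ℝ (Fin d) | ⟪x - p, N⟫ = 0} ∩
          {x : EuclideanSpace ℝ (Fin d) | ⟪x - p₀, N₀⟫ = 0}) := by
  obtain ⟨a, rfl⟩ := hv₀
  intro t
  set c : ℝ := ⟪N, N₀⟫ with hc
  set m : EuclideanSpace ℝ (Fin d) := N - c • N₀ with hm
  have hNN : ⟪N, N⟫ = 1 := by
    rw [real_inner_self_eq_norm_sq, hN]; norm_num
  have hN₀N₀ : ⟪N₀, N₀⟫ = 1 := by
    rw [real_inner_self_eq_norm_sq, hN₀]; norm_num
  have hsym : ⟪N₀, N⟫ = c := (real_inner_comm N₀ N).symm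
  have hmN₀ : ⟪m, N₀⟫ = 0 := by
    rw [hm, inner_sub_left, real_inner_smul_left, hN₀N₀, ← hc]; ring
  have hmN : ⟪m, N⟫ = 1 - c ^ 2 := by
    rw [hm, inner_sub_left, real_inner_smul_left, hsym, hNN]; ring
  have hmnorm : ‖m‖ ^ 2 = 1 - c ^ 2 := by
    rw [← real_inner_self_eq_norm_sq, hm, inner_sub_right, real_inner_smul_right,
      ← hm, hmN, hmN₀]
    ring
  have hmne : m ≠ 0 := by
    intro h
    have h1 : (1 : ℝ) • N + (-c) • N₀ = 0 := by
      rw [sub_eq_zero] at h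
      simp [h]
    have := (LinearIndependent.pair_iff.mp hind) 1 (-c) h1
    exact one_ne_zero this.1
  have hs : (1 : ℝ) - c ^ 2 ≠ 0 := by
    rw [← hmnorm]
    exact pow_ne_zero 2 (norm_ne_zero_iff.mpr hmne)
  set w : EuclideanSpace ℝ (Fin d) :=
    t • (a • N₀ + ⟪v - a • N₀, N⟫ • (‖m‖ ^ 2)⁻¹ • m) with hw
  have hwN : ⟪w, N⟫ = t * ⟪v, N⟫ := by
    simp only [hw, real_inner_smul_left, inner_add_left, hmN, hmnorm, hsym,
      inner_sub_left]
    field_simp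
    ring
  have hwN₀ : ⟪w, N₀⟫ = t * ⟪a • N₀, N₀⟫ := by
    simp only [hw, real_inner_smul_left, inner_add_left, hmN₀, hN₀N₀]
    ring
  ext x
  simp only [Set.mem_inter_iff, Set.mem_setOf_eq, Set.mem_image]
  constructor
  · rintro ⟨h1, h2⟩
    refine ⟨x - w, ⟨?_, ?_⟩, by abel⟩
    · rw [show x - w - p = (x - p) - w by abel, inner_sub_left, h1, hwN, sub_self]
    · rw [show x - w - p₀ = (x - p₀) - w by abel, inner_sub_left, h2, hwN₀, sub_self]
  · rintro ⟨y, ⟨h1, h2⟩, rfl⟩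
    constructor
    · rw [show y + w - p = (y - p) + w by abel, inner_add_left, h1, hwN, zero_add]
    · rw [show y + w - p₀ = (y - p₀) + w by abel, inner_add_left, h2, hwN₀, zero_add]
end

section
/- Let 0 < a_1 ≤ a_2 ≤ … ≤ a_d and let R = {x ∈ ℝ^d : |x_i| ≤ a_i for all i} be the corresponding rectangle, with inradius g = a_1. Then V_R(r) = 2^d a_1⋯a_d − 2^d (a_1−r)(a_2−r)⋯(a_d−r) for 0 ≤ r ≤ g and V_R(r) = 2^d a_1⋯a_d for r ≥ g. Moreover, if m = #{i : a_i = g}, then V_R is of differentiability class C^{m−1} on [0,∞) but not of class C^m. -/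
open MeasureTheory Metric Set Filter
open scoped RealInnerProductSpace

section ReluLemmas

/-- relu to power k+2 has derivative (k+2) * relu^(k+1) everywhere. -/
lemma relu_pow_hasDerivAt (k : ℕ) (x : ℝ) :
    HasDerivAt (fun y : ℝ => max y 0 ^ (k + 2)) (((k : ℝ) + 2) * max x 0 ^ (k + 1)) x := by
  rcases lt_trichotomy x 0 with hx | rfl | hx
  · have h0 : HasDerivAt (fun _ : ℝ => (0:ℝ)) 0 x := hasDerivAt_const x 0
    have hev : (fun y : ℝ => max y 0 ^ (k + 2)) =ᶠ[nhds x] fun _ => (0:ℝ) := by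
      filter_upwards [Iio_mem_nhds hx] with y hy
      simp [max_eq_right (mem_Iio.mp hy).le]
    have := h0.congr_of_eventuallyEq hev
    simpa [max_eq_right hx.le] using this
  · rw [hasDerivAt_iff_isLittleO]
    simp only [max_self, ne_eq, OfNat.ofNat_ne_zero, not_false_eq_true, zero_pow, sub_zero,
      smul_eq_mul, mul_zero]
    have h1 : (fun y : ℝ => max y 0 ^ (k + 1)) =o[nhds 0] (fun _ => (1:ℝ)) := by
      rw [Asymptotics.isLittleO_one_iff]
      have : Continuous fun y : ℝ => max y 0 ^ (k + 1) := by fun_prop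
      simpa using this.tendsto 0
    have h2 : (fun y : ℝ => max y 0) =O[nhds 0] (fun y => y - 0) := by
      rw [Asymptotics.isBigO_iff]
      refine ⟨1, Eventually.of_forall fun y => ?_⟩
      simp only [sub_zero, one_mul, Real.norm_eq_abs]
      rcases le_total y 0 with h | h
      · simp [max_eq_right h, abs_nonneg]
      · simp [max_eq_left h]
    have := h1.mul_isBigO h2
    refine this.congr (fun y => ?_) (fun y => ?_)
    · rw [pow_succ]; ring
    · ring
  · have h0 : HasDerivAt (fun y : ℝ => y ^ (k + 2)) (((k:ℝ) + 2) * x ^ (k + 1)) x := by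
      simpa using hasDerivAt_pow (k + 2) x
    have hev : (fun y : ℝ => max y 0 ^ (k + 2)) =ᶠ[nhds x] fun y => y ^ (k + 2) := by
      filter_upwards [Ioi_mem_nhds hx] with y hy
      simp [max_eq_left (mem_Ioi.mp hy).le]
    have := h0.congr_of_eventuallyEq hev
    simpa [max_eq_left hx.le] using this

/-- relu^(n+1) is C^n. -/
lemma relu_pow_contDiff : ∀ n : ℕ, ContDiff ℝ (n : WithTop ℕ∞) (fun x : ℝ => max x 0 ^ (n + 1))
  | 0 => by
    have : ContDiff ℝ (0 : WithTop ℕ∞) (fun x : ℝ => max x 0 ^ (0 + 1)) := by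
      rw [contDiff_zero]; fun_prop
    simpa using this
  | (n + 1) => by
    have hd : ∀ x : ℝ,
        HasDerivAt (fun y : ℝ => max y 0 ^ (n + 2)) (((n:ℝ) + 2) * max x 0 ^ (n + 1)) x :=
      relu_pow_hasDerivAt n
    have hder : deriv (fun y : ℝ => max y 0 ^ (n + 2))
        = fun x : ℝ => ((n:ℝ) + 2) * max x 0 ^ (n + 1) :=
      funext fun x => (hd x).deriv
    have hcast : ((n + 1 : ℕ) : WithTop ℕ∞) = (n : WithTop ℕ∞) + 1 := by push_cast; rfl
    rw [hcast, contDiff_succ_iff_deriv]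
    refine ⟨fun x => (hd x).differentiableAt, by simp, ?_⟩
    rw [hder]
    exact contDiff_const.mul (relu_pow_contDiff n)

lemma not_differentiableAt_relu : ¬ DifferentiableAt ℝ (fun x : ℝ => max x 0) 0 := by
  intro h
  have habs : (fun x : ℝ => |x|) = fun x : ℝ => 2 * max x 0 - x := by
    funext x
    rcases le_total x 0 with hx | hx
    · simp [max_eq_right hx, abs_of_nonpos hx]
    · simp [max_eq_left hx, abs_of_nonneg hx]; ring
  have : DifferentiableAt ℝ (fun x : ℝ => |x|) 0 := by
    rw [habs]
    exact ((h.const_mul 2).sub differentiableAt_id)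
  exact not_differentiableAt_abs_zero this

lemma not_contDiffAt_relu_pow :
    ∀ n : ℕ, ¬ ContDiffAt ℝ ((n + 1 : ℕ) : WithTop ℕ∞) (fun x : ℝ => max x 0 ^ (n + 1)) 0
  | 0 => by
    intro h
    have := h.differentiableAt (by norm_num)
    apply not_differentiableAt_relu
    simpa using this
  | (n + 1) => by
    intro h
    obtain ⟨u, hu, hcd⟩ := h.contDiffOn le_rfl (by simp)
    obtain ⟨v, hvu, hv, h0v⟩ := _root_.mem_nhds_iff.mp hu
    have hcd' : ContDiffOn ℝ ((n + 2 : ℕ) : WithTop ℕ∞) (fun x : ℝ => max x 0 ^ (n + 2)) v :=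
      (hcd.mono hvu)
    have hcast : ((n + 2 : ℕ) : WithTop ℕ∞) = ((n + 1 : ℕ) : WithTop ℕ∞) + 1 := by
      push_cast; rfl
    have hderiv : ContDiffOn ℝ ((n + 1 : ℕ) : WithTop ℕ∞)
        (deriv fun x : ℝ => max x 0 ^ (n + 2)) v :=
      hcd'.deriv_of_isOpen hv (by rw [← hcast])
    have hder : deriv (fun y : ℝ => max y 0 ^ (n + 2))
        = fun x : ℝ => ((n:ℝ) + 2) * max x 0 ^ (n + 1) :=
      funext fun x => (relu_pow_hasDerivAt n x).deriv
    rw [hder] at hderiv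
    have h1 : ContDiffAt ℝ ((n + 1 : ℕ) : WithTop ℕ∞)
        (fun x : ℝ => ((n:ℝ) + 2) * max x 0 ^ (n + 1)) 0 :=
      (hderiv.contDiffAt (hv.mem_nhds h0v))
    have h2 : ContDiffAt ℝ ((n + 1 : ℕ) : WithTop ℕ∞) (fun x : ℝ => max x 0 ^ (n + 1)) 0 := by
      have := h1.const_smul (((n:ℝ) + 2)⁻¹)
      have hne : ((n:ℝ) + 2) ≠ 0 := by positivity
      simpa [smul_eq_mul, inv_mul_cancel_left₀ hne] using this
    exact not_contDiffAt_relu_pow n h2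

end ReluLemmas

section BoxLemmas

variable {d : ℕ}

local notation "E" => EuclideanSpace ℝ (Fin d)

lemma abs_coord_le_norm (x : E) (i : Fin d) : |x i| ≤ ‖x‖ := by
  rw [EuclideanSpace.norm_eq]
  rw [← Real.sqrt_sq_eq_abs]
  apply Real.sqrt_le_sqrt
  exact Finset.single_le_sum (f := fun j => ‖x j‖ ^ 2) (fun j _ => by positivity)
    (Finset.mem_univ i) |>.trans_eq' (by rw [Real.norm_eq_abs, sq_abs])

lemma dist_coord_le (x y : E) (i : Fin d) : |x i - y i| ≤ dist x y := by
  rw [dist_eq_norm]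
  simpa using abs_coord_le_norm (x - y) i

lemma continuous_coord (i : Fin d) : Continuous (fun x : E => x i) := by
  apply LipschitzWith.continuous (K := 1)
  intro x y
  rw [edist_dist, edist_dist]
  simp only [ENNReal.coe_one, one_mul]
  exact ENNReal.ofReal_le_ofReal (by rw [Real.dist_eq]; exact dist_coord_le x y i)

lemma dist_update (x : E) (i : Fin d) (t : ℝ) :
    dist x (WithLp.toLp 2 (Function.update x.ofLp i t) : E) = |x i - t| := by
  rw [EuclideanSpace.dist_eq]
  rw [show ∑ j, dist (x j) (Function.update x i t j) ^ 2 = |x i - t| ^ 2 from ?_]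
  · rw [Real.sqrt_sq_eq_abs, abs_abs]
  · rw [Finset.sum_eq_single i]
    · simp [Real.dist_eq]
    · intro j _ hj
      simp [Function.update_of_ne hj]
    · simp

lemma isClosed_box (b : Fin d → ℝ) : IsClosed {x : E | ∀ i, |x i| ≤ b i} := by
  have : {x : E | ∀ i, |x i| ≤ b i} = ⋂ i, (fun x : E => x i) ⁻¹' (Icc (-(b i)) (b i)) := by
    ext x; simp [abs_le]
  rw [this]
  exact isClosed_iInter fun i => IsClosed.preimage (continuous_coord i) isClosed_Icc

lemma isOpen_obox (b : Fin d → ℝ) : IsOpen {x : E | ∀ i, |x i| < b i} := by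
  have : {x : E | ∀ i, |x i| < b i} = ⋂ i, (fun x : E => x i) ⁻¹' (Ioo (-(b i)) (b i)) := by
    ext x; simp [abs_lt]
  rw [this]
  exact isOpen_iInter_of_finite fun i => IsOpen.preimage (continuous_coord i) isOpen_Ioo

lemma interior_box (b : Fin d → ℝ) :
    interior {x : E | ∀ i, |x i| ≤ b i} = {x : E | ∀ i, |x i| < b i} := by
  apply Subset.antisymm
  · intro x hx i
    rw [mem_interior_iff_mem_nhds, Metric.mem_nhds_iff] at hx
    obtain ⟨ε, hε, hball⟩ := hx
    have h1 : (WithLp.toLp 2 (Function.update x.ofLp i (x i + ε / 2)) : E) ∈ {x : E | ∀ i, |x i| ≤ b i} := by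
      apply hball
      rw [mem_ball, dist_comm, dist_update]
      rw [show x i - (x i + ε / 2) = -(ε/2) by ring, abs_neg, abs_of_nonneg (by linarith)]
      linarith
    have h2 : (WithLp.toLp 2 (Function.update x.ofLp i (x i - ε / 2)) : E) ∈ {x : E | ∀ i, |x i| ≤ b i} := by
      apply hball
      rw [mem_ball, dist_comm, dist_update]
      rw [show x i - (x i - ε / 2) = ε/2 by ring, abs_of_nonneg (by linarith)]
      linarith
    have e1 := h1 i
    have e2 := h2 i
    simp only [WithLp.ofLp_toLp, Function.update_self] at e1 e2
    rw [abs_le] at e1 e2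
    rw [abs_lt]
    constructor
    · linarith [e2.1]
    · linarith [e1.2]
  · exact interior_maximal (fun x hx i => (hx i).le) (isOpen_obox b)

lemma frontier_box (b : Fin d → ℝ) :
    frontier {x : E | ∀ i, |x i| ≤ b i} =
      {x : E | (∀ i, |x i| ≤ b i) ∧ ∃ i, b i ≤ |x i|} := by
  rw [(isClosed_box b).frontier_eq, interior_box]
  ext x
  simp only [mem_diff, mem_setOf_eq, not_forall, not_lt]

lemma frontier_box_nonempty (hd : 0 < d) (b : Fin d → ℝ) (hb : ∀ i, 0 ≤ b i) :
    (frontier {x : E | ∀ i, |x i| ≤ b i}).Nonempty := by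
  rw [frontier_box]
  refine ⟨(WithLp.toLp 2 (fun i => b i : Fin d → ℝ) : E), fun i => ?_, ⟨⟨0, hd⟩, ?_⟩⟩
  · simp [abs_of_nonneg (hb i)]
  · simp [abs_of_nonneg (hb _)]

lemma innerInterior_box (hd : 0 < d) (b : Fin d → ℝ) (hb : ∀ i, 0 < b i) {r : ℝ} (hr : 0 ≤ r) :
    innerInterior {x : E | ∀ i, |x i| ≤ b i} r = {x : E | ∀ i, |x i| ≤ b i - r} := by
  ext x
  simp only [innerInterior, mem_setOf_eq, mem_sep_iff]
  constructor
  · rintro ⟨hxR, hxd⟩ i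
    set t : ℝ := if 0 ≤ x i then b i else -(b i) with ht
    set y : E := WithLp.toLp 2 (Function.update x.ofLp i t) with hy
    have hyf : y ∈ frontier {x : E | ∀ i, |x i| ≤ b i} := by
      rw [frontier_box]
      constructor
      · intro j
        rcases eq_or_ne j i with rfl | hj
        · rw [hy, WithLp.ofLp_toLp, Function.update_self, ht]
          split <;> simp [abs_of_nonneg (hb j).le, abs_of_nonpos (neg_nonpos.mpr (hb j).le)]
        · rw [hy, WithLp.ofLp_toLp, Function.update_of_ne hj]; exact hxR j
      · refine ⟨i, ?_⟩
        rw [hy, WithLp.ofLp_toLp, Function.update_self, ht]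
        split <;> simp [abs_of_nonneg (hb i).le, abs_of_nonpos (neg_nonpos.mpr (hb i).le)]
    have hdist : dist x y = b i - |x i| := by
      rw [hy, dist_update, ht]
      rcases le_or_gt 0 (x i) with h | h
      · rw [if_pos h, abs_of_nonpos (by linarith [(hxR i), abs_le.mp (hxR i)]), abs_of_nonneg h]
        ring
      · rw [if_neg (not_le.mpr h), abs_of_nonneg (by linarith [abs_le.mp (hxR i)]), abs_of_neg h]
        ring
    have := infDist_le_dist_of_mem (x := x) hyf
    rw [hdist] at this
    have : r ≤ b i - |x i| := le_trans hxd this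
    linarith
  · intro hx
    have hxR : ∀ i, |x i| ≤ b i := fun i => le_trans (hx i) (by linarith [hr])
    refine ⟨hxR, ?_⟩
    refine le_of_not_gt fun hlt => ?_
    obtain ⟨y, hy, hdy⟩ :=
      (infDist_lt_iff (frontier_box_nonempty hd b fun i => (hb i).le)).mp hlt
    rw [frontier_box] at hy
    obtain ⟨hyR, i, hyi⟩ := hy
    have h1 : |x i - y i| ≤ dist x y := dist_coord_le x y i
    have h2 : |y i| - |x i| ≤ |x i - y i| := by
      have := abs_sub_abs_le_abs_sub (y i) (x i)
      rw [abs_sub_comm] at this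
      linarith
    have h3 : b i - (b i - r) ≤ |y i| - |x i| := by
      have := hx i
      linarith
    linarith

lemma measurableSet_box (b : Fin d → ℝ) : MeasurableSet {x : E | ∀ i, |x i| ≤ b i} :=
  (isClosed_box b).measurableSet

lemma volume_box (b : Fin d → ℝ) :
    volume {x : E | ∀ i, |x i| ≤ b i} = ∏ i, ENNReal.ofReal (2 * b i) := by
  have hpre : (MeasurableEquiv.toLp 2 (Fin d → ℝ)).symm ⁻¹'
      (univ.pi fun i => Icc (-(b i)) (b i)) = {x : E | ∀ i, |x i| ≤ b i} := by
    ext x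
    simp only [mem_preimage, MeasurableEquiv.coe_toLp_symm, Set.mem_univ_pi,
      mem_Icc, mem_setOf_eq, abs_le, neg_le]
  rw [← hpre,
    (EuclideanSpace.volume_preserving_symm_measurableEquiv_toLp (Fin d)).measure_preimage
      ((MeasurableSet.univ_pi fun i => measurableSet_Icc).nullMeasurableSet)]
  rw [volume_pi_pi]
  congr 1
  funext i
  rw [Real.volume_Icc]
  congr 1
  ring

end BoxLemmas

/-- For the rectangle `R = {x | |x_i| ≤ a_i}` with
`0 < a_1 ≤ ⋯ ≤ a_d` and inradius `g = a_1`: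
`V_R(r) = 2^d a_1⋯a_d - 2^d(a_1-r)⋯(a_d-r)` on `[0,g]`, `V_R(r) = 2^d a_1⋯a_d` for `r ≥ g`,
and with `m = #{i | a_i = g}`, `V_R` is of class `C^{m-1}` on `[0,∞)` but not `C^m`. -/
theorem statement12 {d : ℕ} (hd : 0 < d) (a : Fin d → ℝ)
    (hpos : ∀ i, 0 < a i) (hmono : Monotone a)
    (R : Set (EuclideanSpace ℝ (Fin d)))
    (hR : R = {x : EuclideanSpace ℝ (Fin d) | ∀ i, |x i| ≤ a i})
    (g : ℝ) (hg : g = a ⟨0, hd⟩)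
    (m : ℕ) (hm : m = {i : Fin d | a i = g}.ncard) :
    inradius R = g ∧
    (∀ r ∈ Icc (0 : ℝ) g,
      VP R r = 2 ^ d * ∏ i, a i - 2 ^ d * ∏ i, (a i - r)) ∧
    (∀ r : ℝ, g ≤ r → VP R r = 2 ^ d * ∏ i, a i) ∧
    ContDiffOn ℝ (m - 1 : ℕ) (VP R) (Ici 0) ∧
    ¬ ContDiffOn ℝ (m : ℕ) (VP R) (Ici 0) := by
  classical
  subst hR
  set i0 : Fin d := ⟨0, hd⟩ with hi0
  set B : Set (EuclideanSpace ℝ (Fin d)) := {x : EuclideanSpace ℝ (Fin d) | ∀ i, |x i| ≤ a i}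
    with hB
  have hga : ∀ i, g ≤ a i := by
    intro i
    rw [hg]
    exact hmono (by rw [Fin.le_def]; exact Nat.zero_le _)
  have hgpos : 0 < g := hg ▸ hpos i0
  -- Part 1 : inradius
  have part1 : inradius B = g := by
    have hgS : ∃ x, closedBall x g ⊆ B := by
      refine ⟨0, fun y hy i => ?_⟩
      have h1 : ‖y‖ ≤ g := by simpa [dist_zero_right] using (mem_closedBall.mp hy)
      exact le_trans (le_trans (abs_coord_le_norm y i) h1) (hga i)
    have hub : ∀ r ∈ {r : ℝ | ∃ x, closedBall x r ⊆ B}, r ≤ g := by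
      rintro r ⟨x, hx⟩
      rcases le_or_gt r 0 with h | h
      · linarith
      · set e : EuclideanSpace ℝ (Fin d) := EuclideanSpace.single i0 (r : ℝ) with he
        have hne : ‖e‖ = r := by
          rw [he, EuclideanSpace.norm_single, Real.norm_eq_abs, abs_of_pos h]
        have hz1 : x + e ∈ closedBall x r := by
          rw [mem_closedBall, dist_comm, dist_eq_norm]
          simp [hne]
        have hz2 : x - e ∈ closedBall x r := by
          rw [mem_closedBall, dist_eq_norm]
          simp [hne]
        have k1 := hx hz1 i0
        have k2 := hx hz2 i0
        have e0 : e i0 = r := by rw [he]; simp [EuclideanSpace.single_apply]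
        have xe1 : (x + e) i0 = x i0 + r := by
          rw [show (x + e) i0 = x i0 + e i0 from rfl, e0]
        have xe2 : (x - e) i0 = x i0 - r := by
          rw [show (x - e) i0 = x i0 - e i0 from rfl, e0]
        rw [xe1, ← hg] at k1; rw [xe2, ← hg] at k2
        rcases abs_le.mp k1 with ⟨_, u1⟩
        rcases abs_le.mp k2 with ⟨u2, _⟩
        linarith
    exact le_antisymm (csSup_le ⟨g, hgS⟩ hub) (le_csSup ⟨g, hub⟩ hgS)
  -- volumes
  have hvolR : volume B = ∏ i, ENNReal.ofReal (2 * a i) := volume_box a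
  have hvolR_ne : volume B ≠ ⊤ := by
    rw [hvolR]
    exact (ENNReal.prod_lt_top fun i _ => ENNReal.ofReal_lt_top).ne
  have htoRealR : (volume B).toReal = 2 ^ d * ∏ i, a i := by
    rw [hvolR, ENNReal.toReal_prod]
    calc ∏ i, (ENNReal.ofReal (2 * a i)).toReal
        = ∏ i, (2 * a i) :=
          Finset.prod_congr rfl fun i _ => ENNReal.toReal_ofReal (by have := hpos i; positivity)
      _ = 2 ^ d * ∏ i, a i := by
          rw [Finset.prod_mul_distrib, Finset.prod_const, Finset.card_univ, Fintype.card_fin]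
  have hVP : ∀ r : ℝ, 0 ≤ r →
      VP B r = (volume B).toReal - (∏ i, ENNReal.ofReal (2 * (a i - r))).toReal := by
    intro r hr
    have hin : innerInterior B r = {x : EuclideanSpace ℝ (Fin d) | ∀ i, |x i| ≤ a i - r} :=
      innerInterior_box hd a hpos hr
    have hsub : {x : EuclideanSpace ℝ (Fin d) | ∀ i, |x i| ≤ a i - r} ⊆ B :=
      fun x hx i => le_trans (hx i) (by linarith)
    have hBvol : volume {x : EuclideanSpace ℝ (Fin d) | ∀ i, |x i| ≤ a i - r}
        = ∏ i, ENNReal.ofReal (2 * (a i - r)) := volume_box _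
    have hBne : volume {x : EuclideanSpace ℝ (Fin d) | ∀ i, |x i| ≤ a i - r} ≠ ⊤ := by
      rw [hBvol]
      exact (ENNReal.prod_lt_top fun i _ => ENNReal.ofReal_lt_top).ne
    rw [VP, hin, measure_diff hsub (measurableSet_box _).nullMeasurableSet hBne,
      ENNReal.toReal_sub_of_le (measure_mono hsub) hvolR_ne, hBvol]
  have part2 : ∀ r ∈ Icc (0:ℝ) g,
      VP B r = 2 ^ d * ∏ i, a i - 2 ^ d * ∏ i, (a i - r) := by
    rintro r ⟨hr0, hrg⟩
    rw [hVP r hr0, htoRealR, ENNReal.toReal_prod]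
    congr 1
    calc ∏ i, (ENNReal.ofReal (2 * (a i - r))).toReal
        = ∏ i, (2 * (a i - r)) :=
          Finset.prod_congr rfl fun i _ =>
            ENNReal.toReal_ofReal (by have := hga i; linarith)
      _ = 2 ^ d * ∏ i, (a i - r) := by
          rw [Finset.prod_mul_distrib, Finset.prod_const, Finset.card_univ, Fintype.card_fin]
  have part3 : ∀ r : ℝ, g ≤ r → VP B r = 2 ^ d * ∏ i, a i := by
    intro r hrg
    have hr0 : (0:ℝ) ≤ r := le_trans hgpos.le hrg
    rw [hVP r hr0, htoRealR]
    have hz : ∏ i, ENNReal.ofReal (2 * (a i - r)) = 0 := by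
      apply Finset.prod_eq_zero (Finset.mem_univ i0)
      rw [ENNReal.ofReal_eq_zero]
      have : a i0 = g := hg.symm
      nlinarith
    rw [hz]
    simp
  -- smoothness setup
  set tm : Finset (Fin d) := Finset.univ.filter (fun i => a i = g) with htm
  set t : Finset (Fin d) := Finset.univ.filter (fun i => ¬ a i = g) with htf
  have hmcard : m = tm.card := by
    rw [hm, htm, show {i : Fin d | a i = g} = ↑(Finset.univ.filter (fun i => a i = g)) by
      ext i; simp, Set.ncard_coe_finset]
  have hm1 : 1 ≤ m := by
    rw [hmcard]
    exact Finset.card_pos.mpr ⟨i0, by simp [htm, hg]⟩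
  have hprodsmooth : ∀ (s : Finset (Fin d)) (n : WithTop ℕ∞),
      ContDiff ℝ n (fun r : ℝ => ∏ i ∈ s, (a i - r)) := by
    intro s n
    induction s using Finset.cons_induction with
    | empty => simpa using contDiff_const
    | cons i s his ih =>
      simp only [Finset.prod_cons]
      exact (contDiff_const.sub contDiff_id).mul ih
  have hsplit : ∀ r : ℝ, ∏ i, (a i - r) = (g - r) ^ m * ∏ i ∈ t, (a i - r) := by
    intro r
    have h1 : ∀ i ∈ tm, a i - r = g - r := fun i hi => by
      rw [(Finset.mem_filter.mp hi).2]
    calc ∏ i, (a i - r)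
        = (∏ i ∈ tm, (a i - r)) * ∏ i ∈ t, (a i - r) :=
          (Finset.prod_filter_mul_prod_filter_not Finset.univ (fun i => a i = g)
            (fun i => a i - r)).symm
      _ = (g - r) ^ m * ∏ i ∈ t, (a i - r) := by
          rw [Finset.prod_congr rfl h1, Finset.prod_const, hmcard]
  have hhg : (∏ i ∈ t, (a i - g)) ≠ 0 := by
    apply ne_of_gt
    apply Finset.prod_pos
    intro i hi
    have h2 : a i ≠ g := by
      have := (Finset.mem_filter.mp (htf ▸ hi)).2
      simpa using this
    have : g < a i := lt_of_le_of_ne (hga i) (Ne.symm h2)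
    linarith
  set W : ℝ → ℝ := fun r => 2 ^ d * ∏ i, a i
      - 2 ^ d * ((∏ i ∈ t, (a i - r)) * max (g - r) 0 ^ m) with hW
  have hWeq : ∀ r ∈ Ici (0:ℝ), VP B r = W r := by
    intro r hr
    have hWr : W r = 2 ^ d * ∏ i, a i
        - 2 ^ d * ((∏ i ∈ t, (a i - r)) * max (g - r) 0 ^ m) := rfl
    rcases le_total r g with hrg | hrg
    · rw [part2 r ⟨hr, hrg⟩, hWr, hsplit r, max_eq_left (by linarith)]
      ring
    · rw [part3 r hrg, hWr, max_eq_right (by linarith), zero_pow (by omega : m ≠ 0)]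
      ring
  have hWs : ContDiff ℝ ((m - 1 : ℕ) : WithTop ℕ∞) W := by
    have hrelu := relu_pow_contDiff (m - 1)
    rw [show m - 1 + 1 = m from by omega] at hrelu
    have hcomp : ContDiff ℝ ((m - 1 : ℕ) : WithTop ℕ∞) (fun r : ℝ => max (g - r) 0 ^ m) :=
      hrelu.comp (contDiff_const.sub contDiff_id)
    rw [hW]
    exact contDiff_const.sub (contDiff_const.mul ((hprodsmooth t _).mul hcomp))
  have pos : ContDiffOn ℝ ((m - 1 : ℕ) : WithTop ℕ∞) (VP B) (Ici 0) :=
    (hWs.contDiffOn).congr hWeq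
  have neg : ¬ ContDiffOn ℝ ((m : ℕ) : WithTop ℕ∞) (VP B) (Ici 0) := by
    intro hcon
    have hca : ContDiffAt ℝ ((m : ℕ) : WithTop ℕ∞) (VP B) g :=
      hcon.contDiffAt (Ici_mem_nhds hgpos)
    have hev : W =ᶠ[nhds g] VP B := by
      filter_upwards [Ioi_mem_nhds hgpos] with r hr
      exact (hWeq r (mem_Ici.mpr (le_of_lt hr))).symm
    have hWg : ContDiffAt ℝ ((m : ℕ) : WithTop ℕ∞) W g := hca.congr_of_eventuallyEq hev
    set φ : ℝ → ℝ := fun r => (∏ i ∈ t, (a i - r)) * max (g - r) 0 ^ m with hφdef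
    have hne2 : ((2:ℝ) ^ d) ≠ 0 := by positivity
    have hφ : ContDiffAt ℝ ((m : ℕ) : WithTop ℕ∞) φ g := by
      have h1 := (contDiffAt_const (c := 2 ^ d * ∏ i, a i)).sub hWg
      have h2 := h1.const_smul (((2:ℝ) ^ d)⁻¹)
      have heq : (fun r => ((2:ℝ) ^ d)⁻¹ • (2 ^ d * ∏ i, a i - W r)) = φ := by
        funext r
        simp only [hW, hφdef, smul_eq_mul]
        field_simp
        ring
      rwa [heq] at h2
    have hhcont : ContinuousAt (fun r : ℝ => ∏ i ∈ t, (a i - r)) g :=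
      ((hprodsmooth t 0).continuous).continuousAt
    have hevne : ∀ᶠ r in nhds g, (∏ i ∈ t, (a i - r)) ≠ 0 := hhcont.eventually_ne hhg
    have hψ : ContDiffAt ℝ ((m : ℕ) : WithTop ℕ∞)
        (fun r => (∏ i ∈ t, (a i - r))⁻¹ * φ r) g :=
      (((hprodsmooth t _).contDiffAt).inv hhg).mul hφ
    have hev2 : (fun r : ℝ => max (g - r) 0 ^ m)
        =ᶠ[nhds g] (fun r => (∏ i ∈ t, (a i - r))⁻¹ * φ r) := by
      filter_upwards [hevne] with r hr
      exact (inv_mul_cancel_left₀ hr _).symm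
    have hrelu : ContDiffAt ℝ ((m : ℕ) : WithTop ℕ∞) (fun r : ℝ => max (g - r) 0 ^ m) g :=
      hψ.congr_of_eventuallyEq hev2
    have haff : ContDiffAt ℝ ((m : ℕ) : WithTop ℕ∞) (fun x : ℝ => g - x) 0 :=
      (contDiff_const.sub contDiff_id).contDiffAt
    have h0 : (fun x : ℝ => g - x) 0 = g := by simp
    have hrelu' : ContDiffAt ℝ ((m : ℕ) : WithTop ℕ∞) (fun r : ℝ => max (g - r) 0 ^ m)
        ((fun x : ℝ => g - x) 0) := by simpa using hrelu
    have hcomp : ContDiffAt ℝ ((m : ℕ) : WithTop ℕ∞)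
        ((fun r : ℝ => max (g - r) 0 ^ m) ∘ (fun x : ℝ => g - x)) 0 :=
      ContDiffAt.comp 0 hrelu' haff
    have hfinal : ContDiffAt ℝ ((m : ℕ) : WithTop ℕ∞) (fun x : ℝ => max x 0 ^ m) 0 := by
      have heq : ((fun r : ℝ => max (g - r) 0 ^ m) ∘ (fun x : ℝ => g - x))
          = fun x : ℝ => max x 0 ^ m := by
        funext x; simp [Function.comp, sub_sub_cancel]
      rwa [heq] at hcomp
    have hnot := not_contDiffAt_relu_pow (m - 1)
    rw [show m - 1 + 1 = m from by omega] at hnot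
    exact hnot hfinal
  exact ⟨part1, part2, part3, pos, neg⟩
end
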